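/- For coprime positive integers q₁, q₂ and integers a, h, n: H_{h,n}(q₁q₂, a) = H_{h\overline{q₂}, n\overline{q₂}}(q₁, a) · H_{h\overline{q₁}, n\overline{q₁}}(q₂, a), where \overline{q₂} is an inverse of q₂ modulo q₁ and \overline{q₁} is an inverse of q₁ modulo q₂. -/

import Mathlib

noncomputable def e (t : ℝ) : ℂ := Complex.exp (2 * Real.pi * Complex.I * t)

noncomputable def Hsum (q : ℕ) (a h n : ℤ) : ℂ :=
  ∑ p ∈ ((Finset.range q) ×ˢ (Finset.range q)).filter
      (fun p : ℕ × ℕ => ((p.1 : ℤ)^2 + (p.2 : ℤ)^2) % q = a % q),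
    e (((-(p.1 : ℤ) * h - (p.2 : ℤ) * n : ℤ) : ℝ) / q)

/-!
Reducing modulo `q`, `H_{h,n}(q, a)` is a sum over pairs `(x, y) ∈ (ℤ/q)²` with `x² + y² = a`,
weighted by the standard additive character `ψ_q(t) = e(t/q)`. Transport it along the Chinese
remainder isomorphism `ℤ/q₁q₂ ≅ ℤ/q₁ × ℤ/q₂`: the condition `x² + y² = a` splits componentwise,
and since `q₂b₂ + q₁b₁ ≡ 1 (mod q₁q₂)` the character splits as
`ψ_{q₁q₂}(t) = ψ_{q₁}(b₂t) ψ_{q₂}(b₁t)`, so the sum factors.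
-/

open Finset

section circleSum

variable {R S M : Type*} [CommRing R] [Fintype R] [DecidableEq R]
  [CommRing S] [Fintype S] [DecidableEq S]

/-- `H_{h,n}(q, a)` over an arbitrary finite commutative ring `R`, with the weight `ψ` in place
of `x ↦ e(x/q)`. -/
def circleSum [AddCommMonoid M] (ψ : R → M) (a h n : R) : M :=
  ∑ x : R × R with x.1 ^ 2 + x.2 ^ 2 = a, ψ (-(x.1 * h + x.2 * n))

theorem circleSum_comp_mul_left [AddCommMonoid M] (ψ : R → M) (b a h n : R) :
    circleSum (fun x ↦ ψ (b * x)) a h n = circleSum ψ a (h * b) (n * b) := by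
  unfold circleSum
  refine sum_congr rfl fun x _ ↦ congrArg ψ ?_
  ring

theorem circleSum_comp_ringEquiv [AddCommMonoid M] (σ : R ≃+* S) (ψ : S → M) (a h n : R) :
    circleSum (ψ ∘ σ) a h n = circleSum ψ (σ a) (σ h) (σ n) := by
  unfold circleSum
  rw [sum_filter, sum_filter]
  refine Fintype.sum_equiv (σ.toEquiv.prodCongr σ.toEquiv) _ _ fun x ↦ ?_
  simp [← map_pow, ← map_add, ← map_mul, ← map_neg, σ.injective.eq_iff]

theorem circleSum_prod [CommSemiring M] (ψ₁ : R → M) (ψ₂ : S → M) (a h n : R × S) :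
    circleSum (fun x ↦ ψ₁ x.1 * ψ₂ x.2) a h n =
      circleSum ψ₁ a.1 h.1 n.1 * circleSum ψ₂ a.2 h.2 n.2 := by
  unfold circleSum
  rw [sum_mul_sum, ← sum_product']
  refine sum_nbij' (fun x ↦ ((x.1.1, x.2.1), (x.1.2, x.2.2)))
    (fun y ↦ ((y.1.1, y.2.1), (y.1.2, y.2.2))) ?_ ?_ ?_ ?_ ?_ <;>
    simp [Prod.ext_iff]

end circleSum

theorem sum_range_natCast_zmod {M : Type*} [AddCommMonoid M] (q : ℕ) [NeZero q]
    (f : ZMod q → M) : ∑ i ∈ range q, f i = ∑ x, f x :=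
  sum_nbij' (↑) ZMod.val (by simp) (by simp [ZMod.val_lt])
    (fun _ hi ↦ ZMod.val_cast_of_lt (mem_range.mp hi)) (fun x _ ↦ ZMod.natCast_zmod_val x)
    fun _ _ ↦ rfl

theorem e_intCast_div (q : ℕ) [NeZero q] (k : ℤ) :
    e ((k : ℝ) / q) = ZMod.stdAddChar (k : ZMod q) := by
  rw [e, ZMod.stdAddChar_coe]
  push_cast
  ring_nf

theorem Hsum_eq_circleSum (q : ℕ) [NeZero q] (a h n : ℤ) :
    Hsum q a h n = circleSum ZMod.stdAddChar (a : ZMod q) h n := by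
  set F : ZMod q → ZMod q → ℂ := fun x y ↦
    if x ^ 2 + y ^ 2 = a then ZMod.stdAddChar (-(x * (h : ZMod q) + y * (n : ZMod q))) else 0
  calc Hsum q a h n = ∑ i ∈ range q, ∑ j ∈ range q, F i j := by
        rw [Hsum, sum_filter, sum_product]
        refine sum_congr rfl fun i _ ↦ sum_congr rfl fun j _ ↦ ?_
        simp only [F, e_intCast_div, ← ZMod.intCast_eq_intCast_iff']
        push_cast
        congr 2
        ring
    _ = ∑ x, ∑ y, F x y := by
        simp only [sum_range_natCast_zmod q (F _)]
        exact sum_range_natCast_zmod q fun x ↦ ∑ y, F x y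
    _ = circleSum ZMod.stdAddChar (a : ZMod q) h n := by
        rw [circleSum, sum_filter, Fintype.sum_prod_type]

theorem Int.mul_add_mul_modEq_one {q₁ q₂ b₁ b₂ : ℤ} (hco : IsCoprime q₁ q₂)
    (hb₂ : q₂ * b₂ ≡ 1 [ZMOD q₁]) (hb₁ : q₁ * b₁ ≡ 1 [ZMOD q₂]) :
    q₂ * b₂ + q₁ * b₁ ≡ 1 [ZMOD q₁ * q₂] := by
  refine (Int.modEq_and_modEq_iff_modEq_mul (Int.isCoprime_iff_gcd_eq_one.mp hco)).mp ⟨?_, ?_⟩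
  · simpa using hb₂.add (Int.modEq_zero_iff_dvd.mpr (dvd_mul_right q₁ b₁))
  · simpa using (Int.modEq_zero_iff_dvd.mpr (dvd_mul_right q₂ b₂)).add hb₁

theorem ZMod.stdAddChar_eq_comp_chineseRemainder {q₁ q₂ : ℕ} [NeZero q₁] [NeZero q₂]
    (hco : q₁.Coprime q₂) {b₁ b₂ : ℤ} (hb₂ : q₂ * b₂ ≡ 1 [ZMOD q₁])
    (hb₁ : q₁ * b₁ ≡ 1 [ZMOD q₂]) :
    (stdAddChar : ZMod (q₁ * q₂) → ℂ) =
      (fun y ↦ stdAddChar ((b₂ : ZMod q₁) * y.1) * stdAddChar ((b₁ : ZMod q₂) * y.2)) ∘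
        chineseRemainder hco := by
  funext x
  obtain ⟨k, rfl⟩ := intCast_surjective x
  obtain ⟨m, hm⟩ := (Int.mul_add_mul_modEq_one (Nat.isCoprime_iff_coprime.mpr hco) hb₂ hb₁).dvd
  simp only [Function.comp_apply, map_intCast, Prod.fst_intCast, Prod.snd_intCast,
    ← Int.cast_mul, stdAddChar_coe, ← Complex.exp_add]
  refine Complex.exp_eq_exp_iff_exists_int.mpr ⟨k * m, ?_⟩
  have hm' : (1 : ℂ) - (q₂ * b₂ + q₁ * b₁) = q₁ * q₂ * m := by exact_mod_cast hm
  have hq₁ : (q₁ : ℂ) ≠ 0 := Nat.cast_ne_zero.mpr (NeZero.ne q₁)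
  have hq₂ : (q₂ : ℂ) ≠ 0 := Nat.cast_ne_zero.mpr (NeZero.ne q₂)
  field_simp
  push_cast
  linear_combination (q₁ * q₂ * k : ℂ) * hm'

theorem Hsum_multiplicative (q₁ q₂ : ℕ) (hq₁ : 0 < q₁) (hq₂ : 0 < q₂)
    (hco : Nat.Coprime q₁ q₂) (a h n : ℤ) (b₁ b₂ : ℤ)
    (hb₂ : ((q₂ : ℤ) * b₂) % q₁ = 1 % (q₁ : ℤ)) (hb₁ : ((q₁ : ℤ) * b₁) % q₂ = 1 % (q₂ : ℤ)) :
    Hsum (q₁ * q₂) a h n = Hsum q₁ a (h * b₂) (n * b₂) * Hsum q₂ a (h * b₁) (n * b₁) := by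
  have : NeZero q₁ := ⟨hq₁.ne'⟩
  have : NeZero q₂ := ⟨hq₂.ne'⟩
  rw [Hsum_eq_circleSum, Hsum_eq_circleSum, Hsum_eq_circleSum,
    ZMod.stdAddChar_eq_comp_chineseRemainder hco hb₂ hb₁, circleSum_comp_ringEquiv,
    circleSum_prod (fun y ↦ ZMod.stdAddChar ((b₂ : ZMod q₁) * y))
      (fun y ↦ ZMod.stdAddChar ((b₁ : ZMod q₂) * y)),
    circleSum_comp_mul_left, circleSum_comp_mul_left]
  simp only [map_intCast, Prod.fst_intCast, Prod.snd_intCast, Int.cast_mul]
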